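/- arXiv:2402.04917 — 2 statements merged into one kernel-verified Lean document; each statement's English description precedes it below -/
import Mathlib

section
/- Let η > 0 and σ ∈ S_η. Let h > x > 0 and h' > x' > 0 satisfy x' < x and h' − x' < h − x. Let L : (0,∞) → (0,∞) with L(T) → ∞ as T → ∞, and let t : (0,∞) → [0,∞) satisfy t(T)/min(L(T)³, T) → 0 as T → ∞. Then there exists T₀ > 0 such that for all T ≥ T₀ and all s ∈ [0, t(T)]: γ^{sup,h,x}_T(s) ≤ γ^{sup,h',x'}_T(s) ≤ olγ^{sup,h',x'}_T(s) ≤ olγ^{sup,h,x}_T(s). -/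
open MeasureTheory Filter Set

/-- The natural speed `v(s) = ∫₀^s σ(u) du`. -/
noncomputable def vInt (σ : ℝ → ℝ) (s : ℝ) : ℝ := ∫ u in (0:ℝ)..s, σ u

/-- The super-critical lower barrier
`γ^{sup,h,x}_T(t) = v(t/T)·T + h·L·∫₀^{t/T} (σ')⁻(u) du − x·σ(0)·L`. -/
noncomputable def gammaSup (σ : ℝ → ℝ) (T L h x t : ℝ) : ℝ :=
  vInt σ (t / T) * T + h * L * (∫ u in (0:ℝ)..(t / T), max (-(deriv σ u)) 0)
    - x * σ 0 * L

/-- The super-critical upper barrier `olγ^{sup,h,x}_T(t) = γ^{sup,h,x}_T(t) + h·σ(t/T)·L`. -/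
noncomputable def olGammaSup (σ : ℝ → ℝ) (T L h x t : ℝ) : ℝ :=
  gammaSup σ T L h x t + h * σ (t / T) * L

/-!
For `s ≤ t(T)` the rescaled time `u = s / T` tends to `0`. Two barriers with parameters
`(h, x)` and `(h', x')` differ by `L·((x - x')·σ(0) - (h - h')·I(u))` resp.
`L·((h - h')·(I(u) + σ(u)) - (x - x')·σ(0))`, where `I(u) = ∫₀ᵘ (σ')⁻ ∈ [0, u/η]`
and `σ(u) ≥ σ(0) - u/η`. Since `0 < x - x' < h - h'`, both differences are nonnegative
as soon as `u` is small compared with these gaps.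
-/

section Barriers

variable {σ : ℝ → ℝ} {K u : ℝ}

theorem integral_negPart_deriv_le (hσ : ContDiff ℝ 1 σ) (hu : 0 ≤ u)
    (hK : ∀ v ∈ Icc 0 u, |deriv σ v| ≤ K) :
    ∫ v in (0:ℝ)..u, max (-deriv σ v) 0 ≤ K * u := by
  have hint : Continuous fun v => max (-deriv σ v) 0 :=
    (hσ.continuous_deriv le_rfl).neg.max continuous_const
  calc ∫ v in (0:ℝ)..u, max (-deriv σ v) 0 ≤ ∫ _ in (0:ℝ)..u, K :=
        intervalIntegral.integral_mono_on hu (hint.intervalIntegrable _ _)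
          intervalIntegrable_const fun v hv =>
            max_le (neg_le.1 (abs_le.1 (hK v hv)).1) ((abs_nonneg _).trans (hK v hv))
    _ = K * u := by simp [mul_comm]

theorem sub_mul_le_of_abs_deriv_le (hσ : ContDiff ℝ 1 σ) (hu : 0 ≤ u)
    (hK : ∀ v ∈ Icc 0 u, |deriv σ v| ≤ K) : σ 0 - K * u ≤ σ u := by
  have hlip : ‖σ u - σ 0‖ ≤ K * ‖u - 0‖ :=
    (convex_Icc 0 u).norm_image_sub_le_of_norm_deriv_le
      (fun v _ => hσ.differentiable one_ne_zero v) hK ⟨le_rfl, hu⟩ ⟨hu, le_rfl⟩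
  rw [Real.norm_eq_abs, Real.norm_eq_abs, sub_zero, abs_of_nonneg hu] at hlip
  linarith [neg_abs_le (σ u - σ 0)]

variable {T L h x h' x' s : ℝ}

theorem gammaSup_sub_gammaSup :
    gammaSup σ T L h' x' s - gammaSup σ T L h x s =
      L * ((x - x') * σ 0 - (h - h') * ∫ v in (0:ℝ)..(s / T), max (-deriv σ v) 0) := by
  unfold gammaSup
  ring

theorem olGammaSup_sub_olGammaSup :
    olGammaSup σ T L h x s - olGammaSup σ T L h' x' s =
      L * ((h - h') * ((∫ v in (0:ℝ)..(s / T), max (-deriv σ v) 0) + σ (s / T))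
        - (x - x') * σ 0) := by
  unfold olGammaSup gammaSup
  ring

theorem gammaSup_le_olGammaSup (hL : 0 ≤ L) (hh : 0 ≤ h) (hσu : 0 ≤ σ (s / T)) :
    gammaSup σ T L h x s ≤ olGammaSup σ T L h x s :=
  le_add_of_nonneg_right (mul_nonneg (mul_nonneg hh hσu) hL)

theorem gammaSup_le_gammaSup (hσ : ContDiff ℝ 1 σ) (hL : 0 ≤ L) (hh : h' ≤ h)
    (hu : 0 ≤ s / T) (hK : ∀ v ∈ Icc 0 (s / T), |deriv σ v| ≤ K)
    (hsmall : (h - h') * K * (s / T) ≤ (x - x') * σ 0) :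
    gammaSup σ T L h x s ≤ gammaSup σ T L h' x' s := by
  have hI := mul_le_mul_of_nonneg_left (integral_negPart_deriv_le hσ hu hK) (sub_nonneg.2 hh)
  rw [← sub_nonneg, gammaSup_sub_gammaSup]
  exact mul_nonneg hL (by linarith)

theorem olGammaSup_le_olGammaSup (hσ : ContDiff ℝ 1 σ) (hL : 0 ≤ L) (hh : h' ≤ h)
    (hu : 0 ≤ s / T) (hK : ∀ v ∈ Icc 0 (s / T), |deriv σ v| ≤ K)
    (hsmall : (h - h') * K * (s / T) ≤ ((h - h') - (x - x')) * σ 0) :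
    olGammaSup σ T L h' x' s ≤ olGammaSup σ T L h x s := by
  have hI : 0 ≤ (h - h') * ∫ v in (0:ℝ)..(s / T), max (-deriv σ v) 0 :=
    mul_nonneg (sub_nonneg.2 hh)
      (intervalIntegral.integral_nonneg hu fun _ _ => le_max_right _ _)
  have hσu := mul_le_mul_of_nonneg_left (sub_mul_le_of_abs_deriv_le hσ hu hK) (sub_nonneg.2 hh)
  rw [← sub_nonneg, olGammaSup_sub_olGammaSup]
  exact mul_nonneg hL (by linarith)

end Barriers

theorem eventually_forall_mem_Icc_div_lt {M t : ℝ → ℝ} (hM : ∀ T > 0, 0 < M T)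
    (ht : Tendsto (fun T => t T / min (M T) T) atTop (nhds 0)) {c : ℝ} (hc : 0 < c) :
    ∀ᶠ T in atTop, ∀ s ∈ Icc 0 (t T), s / T < c := by
  filter_upwards [ht.eventually (gt_mem_nhds hc), eventually_gt_atTop 0] with T hT hT0 s hs
  calc s / T ≤ t T / T := div_le_div_of_nonneg_right hs.2 hT0.le
    _ ≤ t T / min (M T) T :=
      div_le_div_of_nonneg_left (hs.1.trans hs.2) (lt_min (hM T hT0) hT0) (min_le_right _ _)
    _ < c := hT

theorem mul_inv_mul_le_mul_of_le_div {η m a c u : ℝ} (hη : 0 < η) (hm : η ≤ m) (ha : 0 < a)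
    (hc : 0 ≤ c) (hu : u ≤ η ^ 2 * c / a) : a * η⁻¹ * u ≤ c * m :=
  calc a * η⁻¹ * u ≤ a * η⁻¹ * (η ^ 2 * c / a) := by gcongr
    _ = η * c := by field_simp
    _ ≤ c * m := by rw [mul_comm]; gcongr

theorem stmt_2_general (η : ℝ) (hη : 0 < η) (σ : ℝ → ℝ)
    (hσC2 : ContDiff ℝ 2 σ)
    (hσ_lb : ∀ u ∈ Icc (0:ℝ) 1, η ≤ σ u)
    (hσ'_bd : ∀ u ∈ Icc (0:ℝ) 1, |deriv σ u| ≤ η⁻¹)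
    (h x h' x' : ℝ) (hx'_pos : 0 < x') (hx'h' : x' < h')
    (hxx' : x' < x) (hgap : h' - x' < h - x)
    (L : ℝ → ℝ) (hLpos : ∀ T > 0, 0 < L T)
    (t : ℝ → ℝ)
    (ht_small : Tendsto (fun T => t T / min ((L T) ^ 3) T) atTop (nhds 0)) :
    ∃ T₀ > 0, ∀ T ≥ T₀, ∀ s ∈ Icc 0 (t T),
      gammaSup σ T (L T) h x s ≤ gammaSup σ T (L T) h' x' s ∧
      gammaSup σ T (L T) h' x' s ≤ olGammaSup σ T (L T) h' x' s ∧
      olGammaSup σ T (L T) h' x' s ≤ olGammaSup σ T (L T) h x s := by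
  have hσ : ContDiff ℝ 1 σ := hσC2.of_le (by norm_num)
  have ha : 0 < h - h' := by linarith
  have hb : 0 < x - x' := by linarith
  have hab : 0 < (h - h') - (x - x') := by linarith
  have hσ0 : η ≤ σ 0 := hσ_lb 0 ⟨le_rfl, zero_le_one⟩
  have hsmall : ∀ c > 0, ∀ᶠ T in atTop, ∀ s ∈ Icc 0 (t T), s / T < c := fun _ hc =>
    eventually_forall_mem_Icc_div_lt (fun T hT => pow_pos (hLpos T hT) 3) ht_small hc
  have hc₁ : 0 < η ^ 2 * (x - x') / (h - h') := by positivity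
  have hc₂ : 0 < η ^ 2 * ((h - h') - (x - x')) / (h - h') := by positivity
  obtain ⟨T₁, hT₁⟩ :=
    ((hsmall 1 one_pos).and ((hsmall _ hc₁).and (hsmall _ hc₂))).exists_forall_of_atTop
  refine ⟨max T₁ 1, by positivity, fun T hT s hs => ?_⟩
  obtain ⟨hu1, hub, hua⟩ := hT₁ T (le_of_max_le_left hT)
  have hT0 : 0 < T := lt_of_lt_of_le one_pos (le_of_max_le_right hT)
  have hL : 0 ≤ L T := (hLpos T hT0).le
  have hu : 0 ≤ s / T := div_nonneg hs.1 hT0.le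
  have hK : ∀ v ∈ Icc 0 (s / T), |deriv σ v| ≤ η⁻¹ :=
    fun v hv => hσ'_bd v ⟨hv.1, hv.2.trans (hu1 s hs).le⟩
  refine ⟨gammaSup_le_gammaSup hσ hL (by linarith) hu hK ?_,
    gammaSup_le_olGammaSup hL (by linarith) ?_,
    olGammaSup_le_olGammaSup hσ hL (by linarith) hu hK ?_⟩
  · exact mul_inv_mul_le_mul_of_le_div hη hσ0 ha hb.le (hub s hs).le
  · exact hη.le.trans (hσ_lb _ ⟨hu, (hu1 s hs).le⟩)
  · exact mul_inv_mul_le_mul_of_le_div hη hσ0 ha hab.le (hua s hs).le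

theorem stmt_2 (η : ℝ) (hη : 0 < η) (σ : ℝ → ℝ)
    (hσC2 : ContDiff ℝ 2 σ)
    (hσ_lb : ∀ u ∈ Icc (0:ℝ) 1, η ≤ σ u)
    (hσ_ub : ∀ u ∈ Icc (0:ℝ) 1, σ u ≤ η⁻¹)
    (hσ'_bd : ∀ u ∈ Icc (0:ℝ) 1, |deriv σ u| ≤ η⁻¹)
    (hσ''_bd : ∀ u ∈ Icc (0:ℝ) 1, |deriv (deriv σ) u| ≤ η⁻¹)
    (h x h' x' : ℝ) (hx_pos : 0 < x) (hxh : x < h) (hx'_pos : 0 < x') (hx'h' : x' < h')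
    (hxx' : x' < x) (hgap : h' - x' < h - x)
    (L : ℝ → ℝ) (hLpos : ∀ T > 0, 0 < L T) (hL : Tendsto L atTop atTop)
    (t : ℝ → ℝ) (ht_nonneg : ∀ T > 0, 0 ≤ t T)
    (ht_small : Tendsto (fun T => t T / min ((L T) ^ 3) T) atTop (nhds 0)) :
    ∃ T₀ > 0, ∀ T ≥ T₀, ∀ s ∈ Icc 0 (t T),
      gammaSup σ T (L T) h x s ≤ gammaSup σ T (L T) h' x' s ∧
      gammaSup σ T (L T) h' x' s ≤ olGammaSup σ T (L T) h' x' s ∧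
      olGammaSup σ T (L T) h' x' s ≤ olGammaSup σ T (L T) h x s :=
  stmt_2_general η hη σ hσC2 hσ_lb hσ'_bd h x h' x' hx'_pos hx'h' hxx' hgap L hLpos t ht_small
end

section
/- Let (Ω, P) be a probability space, let M ≥ 2 be an integer, let ρ ≥ 0, and let g_1, …, g_M be real random variables on Ω, each of which is Gaussian with mean 0 and variance ρ² (no independence is assumed). Then E[((max_{1≤i≤M} g_i)₊)²] ≤ 4·ρ²·log M. -/
open MeasureTheory ProbabilityTheory Real Set Filter
open scoped ENNReal NNReal Topology

/-! Put `t = √(2ρ² log M)`. Pointwise `((max_i g_i)₊)² ≤ t² + ∑_i g_i² 1{g_i > t}`, so only the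
marginals matter. For `X ~ N(0, v)` and `t > 0`, `E[X²; X > t] ≤ (v t + v²/t) φ_v(t)`: on `(t, ∞)`
we have `x² ≤ x² + (v/t) x - v`, and `(x² + (v/t) x - v) φ_v(x)` is the derivative of
`-(v x + v²/t) φ_v(x)`. The choice of `t` gives `M φ_v(t) = (2πv)^(-1/2)`, after which the `M` tail
terms together contribute at most `2ρ² log M = t²`. -/

lemma hasDerivAt_gaussianPDFReal (μ : ℝ) (v : ℝ≥0) (x : ℝ) :
    HasDerivAt (gaussianPDFReal μ v) (-((x - μ) / v) * gaussianPDFReal μ v x) x := by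
  have hexponent : HasDerivAt (fun y ↦ -(y - μ) ^ 2 / (2 * v)) (-((x - μ) / v)) x :=
    (((hasDerivAt_id x).sub_const μ).pow 2).neg.div_const (2 * (v : ℝ)) |>.congr_deriv
      (by simp only [id]; ring)
  rw [gaussianPDFReal_def]
  exact (hexponent.exp.const_mul (√(2 * π * v))⁻¹).congr_deriv (by ring)

lemma tendsto_linear_mul_gaussianPDFReal_atTop (v : ℝ≥0) (a b : ℝ) :
    Tendsto (fun x ↦ (a * x + b) * gaussianPDFReal 0 v x) atTop (𝓝 0) := by
  rcases eq_or_ne v 0 with rfl | hv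
  · simp
  have hb : 0 < (2 * (v : ℝ))⁻¹ := by positivity
  have h : ∀ s : ℝ, Tendsto (fun x : ℝ ↦ x ^ s * gaussianPDFReal 0 v x) atTop (𝓝 0) := by
    intro s
    have := ((tendsto_rpow_abs_mul_exp_neg_mul_sq_cocompact hb s).mono_left
      atTop_le_cocompact).const_mul (√(2 * π * v))⁻¹
    rw [mul_zero] at this
    refine this.congr' ?_
    filter_upwards [eventually_ge_atTop 0] with x hx
    rw [abs_of_nonneg hx, gaussianPDFReal]
    ring_nf
  have h1 := (h 1).const_mul a
  have h0 := (h 0).const_mul b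
  simpa only [rpow_one, rpow_zero, mul_zero, add_zero, add_mul, mul_assoc, one_mul] using h1.add h0

lemma hasDerivAt_linear_mul_gaussianPDFReal {v : ℝ≥0} (hv : v ≠ 0) (t x : ℝ) :
    HasDerivAt (fun x ↦ -(v * x + v ^ 2 / t) * gaussianPDFReal 0 v x)
      ((x ^ 2 + v / t * x - v) * gaussianPDFReal 0 v x) x := by
  have hlin : HasDerivAt (fun x : ℝ ↦ -(v * x + v ^ 2 / t)) (-v) x := by
    simpa using ((hasDerivAt_id x).const_mul (v : ℝ)).add_const (v ^ 2 / t) |>.fun_neg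
  refine (hlin.mul (hasDerivAt_gaussianPDFReal 0 v x)).congr_deriv ?_
  field_simp
  ring

lemma setLIntegral_Ioi_sq_gaussianReal_le {v : ℝ≥0} (hv : v ≠ 0) {t : ℝ} (ht : 0 < t) :
    ∫⁻ x in Ioi t, ENNReal.ofReal (x ^ 2) ∂gaussianReal 0 v
      ≤ ENNReal.ofReal ((v * t + v ^ 2 / t) * gaussianPDFReal 0 v t) := by
  set F' : ℝ → ℝ := fun x ↦ (x ^ 2 + v / t * x - v) * gaussianPDFReal 0 v x
  have hderiv : ∀ x ∈ Ici t, HasDerivAt _ (F' x) x := fun x _ ↦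
    hasDerivAt_linear_mul_gaussianPDFReal hv t x
  have hdom : ∀ x ∈ Ioi t, x ^ 2 * gaussianPDFReal 0 v x ≤ F' x := by
    intro x (hx : t < x)
    have : (v : ℝ) ≤ v / t * x := by
      rw [div_mul_eq_mul_div, le_div_iff₀ ht]
      exact mul_le_mul_of_nonneg_left hx.le v.coe_nonneg
    exact mul_le_mul_of_nonneg_right (by linarith) (gaussianPDFReal_nonneg 0 v x)
  have hF'_nonneg : ∀ x ∈ Ioi t, 0 ≤ F' x := fun x hx ↦
    (mul_nonneg (sq_nonneg x) (gaussianPDFReal_nonneg 0 v x)).trans (hdom x hx)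
  have hlim := tendsto_linear_mul_gaussianPDFReal_atTop v (-v) (-(v ^ 2 / t))
  simp_rw [show ∀ x : ℝ, (-v * x + -(v ^ 2 / t) : ℝ) = -(v * x + v ^ 2 / t) from
    fun x ↦ by ring] at hlim
  calc ∫⁻ x in Ioi t, ENNReal.ofReal (x ^ 2) ∂gaussianReal 0 v
      = ∫⁻ x in Ioi t, ENNReal.ofReal (x ^ 2 * gaussianPDFReal 0 v x) := by
        rw [gaussianReal_of_var_ne_zero 0 hv, setLIntegral_withDensity_eq_setLIntegral_mul _
          (measurable_gaussianPDF 0 v) (by fun_prop) measurableSet_Ioi]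
        refine setLIntegral_congr_fun measurableSet_Ioi fun x _ ↦ ?_
        rw [ENNReal.ofReal_mul (sq_nonneg x), mul_comm]
        rfl
    _ ≤ ∫⁻ x in Ioi t, ENNReal.ofReal (F' x) :=
        setLIntegral_mono' measurableSet_Ioi fun x hx ↦ ENNReal.ofReal_le_ofReal (hdom x hx)
    _ = ENNReal.ofReal (∫ x in Ioi t, F' x) :=
        (ofReal_integral_eq_lintegral_ofReal
          (integrableOn_Ioi_deriv_of_nonneg' hderiv hF'_nonneg hlim)
          ((ae_restrict_iff' measurableSet_Ioi).2 (.of_forall hF'_nonneg))).symm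
    _ = ENNReal.ofReal ((v * t + v ^ 2 / t) * gaussianPDFReal 0 v t) := by
        rw [integral_Ioi_of_hasDerivAt_of_nonneg' hderiv hF'_nonneg hlim]
        ring_nf

lemma ofReal_sq_max_iSup_zero_le {ι : Type*} [Fintype ι] (f : ι → ℝ) (t : ℝ) :
    ENNReal.ofReal (max (⨆ i, f i) 0 ^ 2)
      ≤ ENNReal.ofReal (t ^ 2) + ∑ i, (Ioi t).indicator (fun x ↦ ENNReal.ofReal (x ^ 2)) (f i) := by
  rcases le_or_gt (⨆ i, f i) 0 with hle | hpos
  · simp [max_eq_right hle]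
  have : Nonempty ι := by
    by_contra! h
    simp [Real.iSup_of_isEmpty] at hpos
  obtain ⟨j, hj⟩ := exists_eq_ciSup_of_finite (f := f)
  rw [max_eq_left hpos.le, ← hj]
  rcases le_or_gt (f j) t with hle | hlt
  · exact le_add_right (ENNReal.ofReal_le_ofReal (pow_le_pow_left₀ (hj ▸ hpos.le) hle 2))
  calc ENNReal.ofReal (f j ^ 2) = (Ioi t).indicator (fun x ↦ ENNReal.ofReal (x ^ 2)) (f j) :=
        (indicator_of_mem (show f j ∈ Ioi t from hlt) (fun x ↦ ENNReal.ofReal (x ^ 2))).symm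
    _ ≤ ∑ i, (Ioi t).indicator (fun x ↦ ENNReal.ofReal (x ^ 2)) (f i) :=
        Finset.single_le_sum (f := fun i ↦ (Ioi t).indicator _ (f i))
          (fun _ _ ↦ bot_le) (Finset.mem_univ j)
    _ ≤ _ := le_add_self

lemma lintegral_sq_max_iSup_zero_le {Ω ι : Type*} [MeasurableSpace Ω] [Fintype ι]
    (P : Measure Ω) [IsProbabilityMeasure P] (g : ι → Ω → ℝ) (hg : ∀ i, Measurable (g i))
    (t : ℝ) :
    ∫⁻ ω, ENNReal.ofReal (max (⨆ i, g i ω) 0 ^ 2) ∂P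
      ≤ ENNReal.ofReal (t ^ 2) + ∑ i, ∫⁻ x in Ioi t, ENNReal.ofReal (x ^ 2) ∂P.map (g i) := by
  have htail : Measurable ((Ioi t).indicator fun x ↦ ENNReal.ofReal (x ^ 2)) :=
    (by fun_prop : Measurable fun x : ℝ ↦ ENNReal.ofReal (x ^ 2)).indicator measurableSet_Ioi
  calc ∫⁻ ω, ENNReal.ofReal (max (⨆ i, g i ω) 0 ^ 2) ∂P
      ≤ ∫⁻ ω, ENNReal.ofReal (t ^ 2)
          + ∑ i, (Ioi t).indicator (fun x ↦ ENNReal.ofReal (x ^ 2)) (g i ω) ∂P :=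
        lintegral_mono fun ω ↦ ofReal_sq_max_iSup_zero_le _ t
    _ = _ := by
        rw [lintegral_add_left measurable_const, lintegral_finsetSum _ fun i _ ↦ by fun_prop,
          lintegral_const, measure_univ, mul_one]
        congr 1
        refine Finset.sum_congr rfl fun i _ ↦ ?_
        rw [← lintegral_indicator measurableSet_Ioi, lintegral_map htail (hg i)]

lemma natCast_mul_tail_bound_le {v : ℝ≥0} (hv : v ≠ 0) {M : ℕ} (hM : 2 ≤ M) :
    M * ((v * √(2 * v * log M) + v ^ 2 / √(2 * v * log M))
      * gaussianPDFReal 0 v √(2 * v * log M)) ≤ 2 * v * log M := by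
  have hM' : (0 : ℝ) < M := by positivity
  have hlog : log 2 ≤ log M := log_le_log two_pos (by exact_mod_cast hM)
  have hpdf : gaussianPDFReal 0 v √(2 * v * log M) = (√(2 * π * v))⁻¹ * (M : ℝ)⁻¹ := by
    rw [gaussianPDFReal, sub_zero, sq_sqrt (by positivity),
      show -(2 * v * log M) / (2 * v) = -log M by field_simp, exp_neg, exp_log hM']
  have hL_half : 1 / 2 < log M := by linarith [log_two_gt_d9]
  have hπL : 1 ≤ √(π * log M) := one_le_sqrt.2 (by nlinarith [pi_gt_three])
  have hsq : √(2 * v * log M) ^ 2 = 2 * v * log M := sq_sqrt (by positivity)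
  have hprod : √(2 * v * log M) * √(2 * π * v) = 2 * v * √(π * log M) := by
    rw [← sqrt_mul (by positivity),
      show 2 * v * log M * (2 * π * v) = (2 * v : ℝ) ^ 2 * (π * log M) by ring,
      sqrt_mul (by positivity), sqrt_sq (by positivity)]
  calc _ = v * (√(2 * v * log M) ^ 2 + v) / (√(2 * v * log M) * √(2 * π * v)) := by
        rw [hpdf]; field_simp
    _ = (2 * log M + 1) * v / (2 * √(π * log M)) := by rw [hsq, hprod]; field_simp
    _ ≤ 2 * v * log M := by
        rw [div_le_iff₀ (by positivity)]
        nlinarith [mul_le_mul_of_nonneg_left hπL (by positivity : (0 : ℝ) ≤ v * log M)]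

theorem stmt_6_general {Ω : Type*} [MeasurableSpace Ω] (P : Measure Ω) [IsProbabilityMeasure P]
    (M : ℕ) (hM : 2 ≤ M) (ρ : ℝ) (g : Fin M → Ω → ℝ)
    (hmeas : ∀ i, Measurable (g i))
    (hgauss : ∀ i, Measure.map (g i) P = gaussianReal 0 (Real.toNNReal (ρ ^ 2))) :
    ∫⁻ ω, ENNReal.ofReal ((max (⨆ i, g i ω) 0) ^ 2) ∂P
      ≤ ENNReal.ofReal (4 * ρ ^ 2 * Real.log M) := by
  rcases eq_or_ne ρ 0 with rfl | hρ
  · refine (lintegral_sq_max_iSup_zero_le P g hmeas 0).trans ?_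
    simp [hgauss, gaussianReal_zero_var, restrict_dirac]
  set v := (ρ ^ 2).toNNReal
  have hv : v ≠ 0 := by simpa [v] using hρ
  have hvρ : (v : ℝ) = ρ ^ 2 := coe_toNNReal _ (sq_nonneg ρ)
  set t := √(2 * v * log M)
  have ht : 0 < t := sqrt_pos.2 (mul_pos (by positivity) (log_pos (by exact_mod_cast hM)))
  calc ∫⁻ ω, ENNReal.ofReal (max (⨆ i, g i ω) 0 ^ 2) ∂P
      ≤ ENNReal.ofReal (t ^ 2) + ∑ i, ∫⁻ x in Ioi t, ENNReal.ofReal (x ^ 2) ∂P.map (g i) :=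
        lintegral_sq_max_iSup_zero_le P g hmeas t
    _ ≤ ENNReal.ofReal (t ^ 2)
          + ∑ _i : Fin M, ENNReal.ofReal ((v * t + v ^ 2 / t) * gaussianPDFReal 0 v t) := by
        gcongr with i
        rw [hgauss i]
        exact setLIntegral_Ioi_sq_gaussianReal_le hv ht
    _ = ENNReal.ofReal (t ^ 2 + M * ((v * t + v ^ 2 / t) * gaussianPDFReal 0 v t)) := by
        rw [Finset.sum_const, Finset.card_univ, Fintype.card_fin, nsmul_eq_mul,
          ENNReal.ofReal_add (sq_nonneg t)
            (mul_nonneg M.cast_nonneg (mul_nonneg (by positivity) (gaussianPDFReal_nonneg 0 v t))),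
          ENNReal.ofReal_mul M.cast_nonneg,
          ENNReal.ofReal_natCast]
    _ ≤ ENNReal.ofReal (4 * ρ ^ 2 * log M) := by
        refine ENNReal.ofReal_le_ofReal ?_
        have := natCast_mul_tail_bound_le hv hM
        rw [sq_sqrt (by positivity), ← hvρ]
        linarith

theorem stmt_6 {Ω : Type*} [MeasurableSpace Ω] (P : Measure Ω) [IsProbabilityMeasure P]
    (M : ℕ) (hM : 2 ≤ M) (ρ : ℝ) (hρ : 0 ≤ ρ) (g : Fin M → Ω → ℝ)
    (hmeas : ∀ i, Measurable (g i))
    (hgauss : ∀ i, Measure.map (g i) P = gaussianReal 0 (Real.toNNReal (ρ ^ 2))) :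
    ∫⁻ ω, ENNReal.ofReal ((max (⨆ i, g i ω) 0) ^ 2) ∂P
      ≤ ENNReal.ofReal (4 * ρ ^ 2 * Real.log M) :=
  stmt_6_general P M hM ρ g hmeas hgauss
end
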